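/- Let G be a simple graph on a vertex type V with feature map h : V → L, let v : V, and let k : ℕ. Then the level-k tree of v in G equals the level-k tree of v in the subgraph induced by the connected component of v: T(G, v, k) = T(G', v, k), where G' is the induced subgraph of G on the set {u : V | G.Reachable v u}, with the restricted feature map. -/
import Mathlib


universe u v

/-- The type of level-`k` trees: a level-`0` tree is a multiset of labels, and a
level-`(k+1)` tree is a label together with a multiset of level-`k` trees. -/
def TreeT (L : Type v) : ℕ → Type v
  | 0 => Multiset L
  | k + 1 => L × Multiset (TreeT L k)

/-- The level-`k` tree of a node `u`: `T (G, u, 0) = leaf {h u}` and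
`T (G, u, k+1) = node (h u) {T (G, w, k) | w ∈ N(u)}`. -/
noncomputable def levelTree {V : Type u} {L : Type v} [Fintype V] (G : SimpleGraph V)
    (h : V → L) : (k : ℕ) → V → TreeT L k
  | 0, u => ({h u} : Multiset L)
  | k + 1, u =>
    letI : DecidableRel G.Adj := Classical.decRel _
    ((h u, (G.neighborFinset u).val.map (levelTree G h k)) : L × Multiset (TreeT L k))

open scoped Classical in
private lemma levelTree_aux
    {V : Type u} {L : Type v} [Fintype V] (G : SimpleGraph V) (h : V → L)
    (v : V) (k : ℕ) :
    ∀ (u : V) (hu : G.Reachable v u),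
      levelTree G h k u =
        levelTree (G.induce {u : V | G.Reachable v u}) (fun u => h u.val) k ⟨u, hu⟩ := by
  induction k with
  | zero => intro u hu; rfl
  | succ k ih =>
    intro u hu
    show (_, _) = (_, _)
    refine Prod.ext rfl ?_
    show Multiset.map _ _ = Multiset.map _ _
    have key : (G.neighborFinset u).val =
        ((G.induce {u : V | G.Reachable v u}).neighborFinset ⟨u, hu⟩).val.map
          Subtype.val := by
      have : ((G.induce {u : V | G.Reachable v u}).neighborFinset
          ⟨u, hu⟩).map (Function.Embedding.subtype _) = G.neighborFinset u := by
        ext w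
        simp only [Finset.mem_map, SimpleGraph.mem_neighborFinset,
          Function.Embedding.coe_subtype]
        constructor
        · rintro ⟨⟨w, hw⟩, haw, rfl⟩
          exact haw
        · intro haw
          exact ⟨⟨w, hu.trans haw.reachable⟩, haw, rfl⟩
      rw [← this]; rfl
    rw [key, Multiset.map_map]
    apply Multiset.map_congr rfl
    intro w hw
    exact ih w.val w.2

open scoped Classical in
theorem levelTree_eq_levelTree_connectedComponent
    {V : Type u} {L : Type v} [Fintype V] (G : SimpleGraph V) (h : V → L)
    (v : V) (k : ℕ) :
    levelTree G h k v =
      levelTree (G.induce {u : V | G.Reachable v u}) (fun u => h u.val) k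
        ⟨v, SimpleGraph.Reachable.refl v⟩ := by
  exact levelTree_aux G h v k v (SimpleGraph.Reachable.refl v)
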